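/- arXiv:2602.20866 — 5 statements merged into one kernel-verified Lean document; each statement's English description precedes it below -/
import Mathlib

section
/- Let A and B be change structures. The sum type A + B forms a change structure with change type given by the inductive type with constructors cl : A' → Δ, cr : B' → Δ, sl : A → Δ, sr : B → Δ, null : Δ, where update is defined by: inl x ⊕ cl x' = inl (x ⊕ x'), inl x ⊕ cr y' = inl x, inr y ⊕ cl x' = inr y, inr y ⊕ cr y' = inr (y ⊕ y'), v ⊕ sl x = inl x, v ⊕ sr y = inr y, v ⊕ null = v; and difference is: inl x ⊖ inl y = cl (x ⊖ y), inl x ⊖ inr y = sl x, inr x ⊖ inl y = sr x, inr x ⊖ inr y = cr (x ⊖ y). Then the completeness law u ⊕ (v ⊖ u) = v holds for all u, v : A + B. -/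
/-- Changes on a sum type. -/
inductive SumDelta (A A' B B' : Type*) where
  | cl (x' : A')
  | cr (y' : B')
  | sl (x : A)
  | sr (y : B)
  | null

/-- Update operation for the sum change structure. -/
def sumUpdate {A A' B B' : Type*} (upA : A → A' → A) (upB : B → B' → B) :
    A ⊕ B → SumDelta A A' B B' → A ⊕ B
  | .inl x, .cl x' => .inl (upA x x')
  | .inl x, .cr _ => .inl x
  | .inr y, .cl _ => .inr y
  | .inr y, .cr y' => .inr (upB y y')
  | _, .sl x => .inl x
  | _, .sr y => .inr y
  | v, .null => v

/-- Difference operation for the sum change structure. -/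
def sumDiff {A A' B B' : Type*} (diffA : A → A → A') (diffB : B → B → B') :
    A ⊕ B → A ⊕ B → SumDelta A A' B B'
  | .inl x, .inl y => .cl (diffA x y)
  | .inl x, .inr _ => .sl x
  | .inr x, .inl _ => .sr x
  | .inr x, .inr y => .cr (diffB x y)

/-- The sum of two change structures satisfies the completeness law. -/
theorem sum_change_structure_complete
    {A A' B B' : Type*}
    (upA : A → A' → A) (diffA : A → A → A')
    (upB : B → B' → B) (diffB : B → B → B')
    (completeA : ∀ x y : A, upA x (diffA y x) = y)
    (completeB : ∀ x y : B, upB x (diffB y x) = y) :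
    ∀ u v : A ⊕ B, sumUpdate upA upB u (sumDiff diffA diffB v u) = v := by
  intro u v
  cases u <;> cases v <;> simp [sumUpdate, sumDiff, completeA, completeB]
end

section
/- Let A, B, C be change structures with value types equal to change types, and let f : A × B → C be bilinear: f (x ⊕ x', y) = f (x, y) ⊕ f (x', y) and f (x, y ⊕ y') = f (x, y) ⊕ f (x, y'). Assume ⊕ on C is associative and commutative. Then the BiLin combinator, with cache type A × B, initialization i (x, y) := (f (x, y), (x, y)), and derivative d (x', y') (x, y) := (f (x', y') ⊕ f (x', y) ⊕ f (x, y'), (x ⊕ x', y ⊕ y')), is a consistent incrementalization of f. In particular, f (x ⊕ x', y ⊕ y') = f (x, y) ⊕ (f (x', y') ⊕ f (x', y) ⊕ f (x, y')). -/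
/-- The BiLin combinator for bilinear functions yields a consistent
    incrementalization. Values and changes coincide for `A`, `B`, `C`. -/
theorem bilin_consistent
    {A B C : Type*}
    (upA : A → A → A) (upB : B → B → B) (upC : C → C → C)
    (f : A × B → C)
    (hlinl : ∀ (x x' : A) (y : B), f (upA x x', y) = upC (f (x, y)) (f (x', y)))
    (hlinr : ∀ (x : A) (y y' : B), f (x, upB y y') = upC (f (x, y)) (f (x, y')))
    (hassoc : ∀ x y z : C, upC x (upC y z) = upC (upC x y) z)
    (hcomm : ∀ x y : C, upC x y = upC y x) :
    let i : A × B → C × (A × B) := fun p => (f p, p)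
    let d : A × B → A × B → C × (A × B) := fun p' p =>
      (upC (upC (f (p'.1, p'.2)) (f (p'.1, p.2))) (f (p.1, p'.2)),
       (upA p.1 p'.1, upB p.2 p'.2))
    (∀ (x : A) (y : B) (x' : A) (y' : B),
      f (upA x x', upB y y') =
        upC (f (x, y)) (upC (upC (f (x', y')) (f (x', y))) (f (x, y')))) ∧
    (∀ p : A × B, (i p).1 = f p) ∧
    (∀ (p p' : A × B),
      f (upA p.1 p'.1, upB p.2 p'.2) = upC (f p) (d p' (i p).2).1) ∧
    (∀ (p p' : A × B),
      (i (upA p.1 p'.1, upB p.2 p'.2)).2 = (d p' (i p).2).2) := by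
  intro i d
  have key : ∀ (x : A) (y : B) (x' : A) (y' : B),
      f (upA x x', upB y y') =
        upC (f (x, y)) (upC (upC (f (x', y')) (f (x', y))) (f (x, y'))) := by
    intro x y x' y'
    rw [hlinl, hlinr, hlinr]
    -- (a ⊕ b) ⊕ (c ⊕ d) = a ⊕ ((d ⊕ b) ⊕ c)  where a=f(x,y), b=f(x,y'), c=f(x',y), d=f(x',y')
    set a := f (x, y); set b := f (x, y'); set c := f (x', y); set dd := f (x', y')
    rw [← hassoc]
    congr 1
    rw [hassoc, hcomm b, hcomm dd c, ← hassoc, hcomm b, hassoc]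
  exact ⟨key, fun p => rfl, fun p p' => key p.1 p.2 p'.1 p'.2, fun p p' => rfl⟩
end

section
/- If (C_f, i_f, d_f) is a consistent incrementalization of f : A → B and (C_g, i_g, d_g) is a consistent incrementalization of g : B → C, then the composed tuple with cache C_f × C_g, initialization i x := let (y, c₁) := i_f x; let (z, c₂) := i_g y; (z, (c₁, c₂)), and derivative d x' (c₁, c₂) := let (y', c₁') := d_f x' c₁; let (z', c₂') := d_g y' c₂; (z', (c₁', c₂')), is a consistent incrementalization of g ∘ f. -/
/-- Sequential composition of consistent incrementalizations is a consistent
    incrementalization of the composition `g ∘ f`. -/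
theorem seq_consistent
    {A A' B B' C C' Cf Cg : Type*}
    (upA : A → A' → A) (upB : B → B' → B) (upC : C → C' → C)
    (f : A → B) (g : B → C)
    (i_f : A → B × Cf) (d_f : A' → Cf → B' × Cf)
    (i_g : B → C × Cg) (d_g : B' → Cg → C' × Cg)
    (hf₀ : ∀ x, (i_f x).1 = f x)
    (hf₁ : ∀ x x', f (upA x x') = upB (f x) (d_f x' (i_f x).2).1)
    (hf₂ : ∀ x x', (i_f (upA x x')).2 = (d_f x' (i_f x).2).2)
    (hg₀ : ∀ y, (i_g y).1 = g y)
    (hg₁ : ∀ y y', g (upB y y') = upC (g y) (d_g y' (i_g y).2).1)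
    (hg₂ : ∀ y y', (i_g (upB y y')).2 = (d_g y' (i_g y).2).2) :
    let i : A → C × (Cf × Cg) := fun x =>
      ((i_g (i_f x).1).1, ((i_f x).2, (i_g (i_f x).1).2))
    let d : A' → Cf × Cg → C' × (Cf × Cg) := fun x' c =>
      ((d_g (d_f x' c.1).1 c.2).1, ((d_f x' c.1).2, (d_g (d_f x' c.1).1 c.2).2))
    (∀ x, (i x).1 = g (f x)) ∧
    (∀ x x', g (f (upA x x')) = upC (g (f x)) (d x' (i x).2).1) ∧
    (∀ x x', (i (upA x x')).2 = (d x' (i x).2).2) := by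
  intro i d
  refine ⟨fun x => by simp [i, hf₀, hg₀],
          fun x x' => by simp [i, d, hf₀, hf₁, hg₁],
          fun x x' => by simp [i, d, hf₀, hf₁, hf₂, hg₂]⟩
end

section
/- If (C_f, i_f, d_f) is a consistent incrementalization of f : A → B and (C_g, i_g, d_g) is a consistent incrementalization of g : C → D, then the parallel composition with cache C_f × C_g, initialization i (x₁, x₂) := ((i_f x₁).1, (i_g x₂).1) paired with caches ((i_f x₁).2, (i_g x₂).2), and derivative applying d_f and d_g componentwise, is a consistent incrementalization of the function (x₁, x₂) ↦ (f x₁, g x₂) on the product change structure A × C → B × D. -/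
/-- Parallel composition of consistent incrementalizations is a consistent
    incrementalization of `(x₁, x₂) ↦ (f x₁, g x₂)` on the product change
    structures. -/
theorem par_consistent
    {A A' B B' C C' D D' Cf Cg : Type*}
    (upA : A → A' → A) (upB : B → B' → B) (upC : C → C' → C) (upD : D → D' → D)
    (f : A → B) (g : C → D)
    (i_f : A → B × Cf) (d_f : A' → Cf → B' × Cf)
    (i_g : C → D × Cg) (d_g : C' → Cg → D' × Cg)
    (hf₀ : ∀ x, (i_f x).1 = f x)
    (hf₁ : ∀ x x', f (upA x x') = upB (f x) (d_f x' (i_f x).2).1)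
    (hf₂ : ∀ x x', (i_f (upA x x')).2 = (d_f x' (i_f x).2).2)
    (hg₀ : ∀ x, (i_g x).1 = g x)
    (hg₁ : ∀ x x', g (upC x x') = upD (g x) (d_g x' (i_g x).2).1)
    (hg₂ : ∀ x x', (i_g (upC x x')).2 = (d_g x' (i_g x).2).2) :
    let h : A × C → B × D := fun p => (f p.1, g p.2)
    let upAC : A × C → A' × C' → A × C := fun p p' => (upA p.1 p'.1, upC p.2 p'.2)
    let upBD : B × D → B' × D' → B × D := fun p p' => (upB p.1 p'.1, upD p.2 p'.2)
    let i : A × C → (B × D) × (Cf × Cg) := fun p =>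
      (((i_f p.1).1, (i_g p.2).1), ((i_f p.1).2, (i_g p.2).2))
    let d : A' × C' → Cf × Cg → (B' × D') × (Cf × Cg) := fun p' c =>
      (((d_f p'.1 c.1).1, (d_g p'.2 c.2).1), ((d_f p'.1 c.1).2, (d_g p'.2 c.2).2))
    (∀ p, (i p).1 = h p) ∧
    (∀ p p', h (upAC p p') = upBD (h p) (d p' (i p).2).1) ∧
    (∀ p p', (i (upAC p p')).2 = (d p' (i p).2).2) := by
  refine ⟨fun p => ?_, fun p p' => ?_, fun p p' => ?_⟩
  · simp [hf₀, hg₀]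
  · simp [hf₁, hg₁]
  · simp [hf₂, hg₂]
end

section
/- If (C_f, i_f, d_f) is a consistent incrementalization of f : A → B, then the map lifting, with cache type I → C_f, initialization i x := (λ j => (i_f (x j)).1, λ j => (i_f (x j)).2), and derivative d x' c := (λ j => (d_f (x' j) (c j)).1, λ j => (d_f (x' j) (c j)).2), is a consistent incrementalization of the function (x : I → A) ↦ (λ j => f (x j)) with respect to the pointwise change structures on I → A and I → B (assuming functional extensionality). -/
/-- The map lifting of a consistent incrementalization to the pointwise change
    structure on function spaces is again a consistent incrementalization. -/
theorem map_consistent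
    {A A' B B' Cf : Type*} {I : Type*}
    (upA : A → A' → A) (upB : B → B' → B)
    (f : A → B)
    (i_f : A → B × Cf) (d_f : A' → Cf → B' × Cf)
    (hf₀ : ∀ x, (i_f x).1 = f x)
    (hf₁ : ∀ x x', f (upA x x') = upB (f x) (d_f x' (i_f x).2).1)
    (hf₂ : ∀ x x', (i_f (upA x x')).2 = (d_f x' (i_f x).2).2) :
    let h : (I → A) → (I → B) := fun x j => f (x j)
    let upIA : (I → A) → (I → A') → (I → A) := fun x x' j => upA (x j) (x' j)
    let upIB : (I → B) → (I → B') → (I → B) := fun y y' j => upB (y j) (y' j)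
    let i : (I → A) → (I → B) × (I → Cf) := fun x =>
      (fun j => (i_f (x j)).1, fun j => (i_f (x j)).2)
    let d : (I → A') → (I → Cf) → (I → B') × (I → Cf) := fun x' c =>
      (fun j => (d_f (x' j) (c j)).1, fun j => (d_f (x' j) (c j)).2)
    (∀ x, (i x).1 = h x) ∧
    (∀ x x', h (upIA x x') = upIB (h x) (d x' (i x).2).1) ∧
    (∀ x x', (i (upIA x x')).2 = (d x' (i x).2).2) := by
  refine ⟨fun x => funext fun j => hf₀ _, fun x x' => funext fun j => hf₁ _ _,
    fun x x' => funext fun j => hf₂ _ _⟩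
end
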